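/- Let T = {1,…,n} and, for 1 ≤ i ≤ n, let R_i = {i} ∪ {n+1,…,2n−1}. Then η(v_T) = −( φ(v_T) + Σ_{i=1}^n (−1)^{i−1} φ(v_{R_i}) ). -/

import Mathlib

open Finset

/-- Number of inversions of a list. -/
def invCount {α : Type*} [LinearOrder α] (l : List α) : ℕ :=
  (Finset.univ.filter
    (fun p : Fin l.length × Fin l.length => p.1 < p.2 ∧ l.get p.2 < l.get p.1)).card

/-- The sign `(-1)^(number of inversions)` of the permutation sorting a list
with pairwise distinct entries into increasing order. -/
noncomputable def invSign {α : Type*} [LinearOrder α] (l : List α) : ℂ :=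
  (-1) ^ invCount l

/-- Replace the entry `a` by `b` (in place) in a list. -/
def replaceOne {α : Type*} [DecidableEq α] (l : List α) (a b : α) : List α :=
  l.map fun z => if z = a then b else z

open scoped Classical in
/-- Dirac delta: the basis vector corresponding to an index `r`. -/
noncomputable def delta {β : Type*} (r : β) : β → ℂ := fun r' => if r' = r then 1 else 0

/-- Index for the basis of ordered column tabloids of shape `(2^m, 1^{n-m})` on
`{1, …, n+m}` (identified with `Fin (n+m)`): such a tabloid is recorded by the
set `T` of entries of its first column (the second column is the complement). -/
abbrev Col (n m : ℕ) := {T : Finset (Fin (n + m)) // T.card = n}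

/-- The space `M̃` of column tabloids of shape `(2^m, 1^{n-m})`. -/
abbrev Mt (n m : ℕ) := Col n m → ℂ

lemma card_compl' {n m : ℕ} (T : Col n m) : (T.1ᶜ).card = m := by
  rw [Finset.card_compl, T.2, Fintype.card_fin]
  omega

/-- `yel T j` is the `(j+1)`-st smallest element of the complement of `T`
(i.e. of the second column). -/
noncomputable def yel {n m : ℕ} (T : Col n m) (j : Fin m) : Fin (n + m) :=
  (T.1ᶜ).orderEmbOfFin (card_compl' T) j

lemma yel_not_mem {n m : ℕ} (T : Col n m) (j : Fin m) : yel T j ∉ T.1 :=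
  Finset.mem_compl.mp (Finset.orderEmbOfFin_mem (T.1ᶜ) (card_compl' T) j)

/-- The first column obtained from `T` after exchanging `x ∈ T` with the
`(j+1)`-st smallest element of the complement. -/
noncomputable def swapSet {n m : ℕ} (T : Col n m) (x : Fin (n + m)) (j : Fin m) :
    Finset (Fin (n + m)) :=
  insert (yel T j) (T.1.erase x)

lemma swapSet_card {n m : ℕ} (T : Col n m) {x : Fin (n + m)} (hx : x ∈ T.1) (j : Fin m) :
    (swapSet T x j).card = n := by
  have h0 : 0 < n := T.2 ▸ Finset.card_pos.mpr ⟨x, hx⟩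
  rw [swapSet, Finset.card_insert_of_notMem
      (fun h => yel_not_mem T j (Finset.mem_of_mem_erase h)),
    Finset.card_erase_of_mem hx, T.2]
  omega

/-- `swap_{x,j}(T)`: the signed basis vector obtained from `T` by exchanging
`x` (in the first column) with the `(j+1)`-st entry of the second column in
place, the sign `ε` being the product of the signs of the two permutations
re-sorting the two columns. -/
noncomputable def swapTerm {n m : ℕ} (T : Col n m) (x : {a // a ∈ T.1}) (j : Fin m) :
    Mt n m :=
  (invSign (replaceOne (T.1.sort (· ≤ ·)) x.1 (yel T j)) *
      invSign (replaceOne ((T.1ᶜ).sort (· ≤ ·)) (yel T j) x.1)) •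
    delta (⟨swapSet T x.1 j, swapSet_card T x.2 j⟩ : Col n m)

/-- The operator `η` on the basis vector `v_T`. -/
noncomputable def etaBasis {n m : ℕ} (T : Col n m) : Mt n m :=
  (m : ℂ) • delta T - ∑ j : Fin m, ∑ x ∈ T.1.attach, swapTerm T x j

/-- The operator `η : M̃ → M̃`, extended linearly from the basis. -/
noncomputable def etaFun {n m : ℕ} (f : Mt n m) : Mt n m :=
  ∑ T : Col n m, f T • etaBasis T

/-- `η` as a linear map. -/
noncomputable def etaLin (n m : ℕ) : Mt n m →ₗ[ℂ] Mt n m where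
  toFun := etaFun
  map_add' f g := by
    simp [etaFun, add_smul, Finset.sum_add_distrib]
  map_smul' c f := by
    simp [etaFun, Finset.smul_sum, smul_smul]

/-- The sign picked up when re-sorting the two columns after relabelling by `σ`. -/
noncomputable def actSign {n m : ℕ} (σ : Equiv.Perm (Fin (n + m))) (T : Col n m) : ℂ :=
  invSign ((T.1.sort (· ≤ ·)).map ⇑σ) * invSign (((T.1ᶜ).sort (· ≤ ·)).map ⇑σ)

lemma image_card {n m : ℕ} (σ : Equiv.Perm (Fin (n + m))) (T : Col n m) :
    (T.1.image ⇑σ).card = n := by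
  rw [Finset.card_image_of_injective _ σ.injective, T.2]

/-- The (signed) action of `S_{n+m}` on the space of column tabloids:
`σ • v_T = sgn(sort₁) sgn(sort₂) v_{σ(T)}`, extended linearly. -/
noncomputable def act {n m : ℕ} (σ : Equiv.Perm (Fin (n + m))) (f : Mt n m) : Mt n m :=
  ∑ T : Col n m, f T •
    (actSign σ T • delta (⟨T.1.image ⇑σ, image_card σ T⟩ : Col n m))

section SpechtSide

variable (γ : Type*) [Fintype γ] [DecidableEq γ] (p q : ℕ)

/-- A bijective Young tableau of the two-column shape with column lengths
`p` (first column) and `q` (second column), with entries in `γ`: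
a bijection from the cells to the entries. -/
abbrev Tabl := (Fin p ⊕ Fin q) ≃ γ

/-- `rows` is a row tabloid of shape `(2^q, 1^{p-q})`: the first `q` rows are
unordered pairs, the remaining rows singletons, all pairwise disjoint
(together they then necessarily partition `γ`). -/
def IsRowTab (rows : Fin p → Finset γ) : Prop :=
  (∀ i, (rows i).card = if (i : ℕ) < q then 2 else 1) ∧
  ∀ i j, i ≠ j → Disjoint (rows i) (rows j)

/-- Row tabloids of shape `(2^q, 1^{p-q})`. -/
abbrev RowTab := {rows : Fin p → Finset γ // IsRowTab γ p q rows}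

/-- The permutation module `M^{(2^q,1^{p-q})}`, with basis the row tabloids. -/
abbrev MP := RowTab γ p q → ℂ

variable {γ p q}

/-- The rows of a tableau. -/
def rowsOf (t : Tabl γ p q) : Fin p → Finset γ := fun i =>
  if h : (i : ℕ) < q then {t (Sum.inl i), t (Sum.inr ⟨(i : ℕ), h⟩)}
  else {t (Sum.inl i)}

lemma mem_rowsOf {t : Tabl γ p q} {i : Fin p} {a : γ} (ha : a ∈ rowsOf t i) :
    a = t (Sum.inl i) ∨ ∃ h : (i : ℕ) < q, a = t (Sum.inr ⟨(i : ℕ), h⟩) := by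
  unfold rowsOf at ha
  split_ifs at ha with h
  · rcases Finset.mem_insert.mp ha with h1 | h1
    · exact Or.inl h1
    · exact Or.inr ⟨h, Finset.mem_singleton.mp h1⟩
  · exact Or.inl (Finset.mem_singleton.mp ha)

lemma isRowTab_rowsOf (t : Tabl γ p q) : IsRowTab γ p q (rowsOf t) := by
  constructor
  · intro i
    by_cases h : (i : ℕ) < q
    · rw [rowsOf, dif_pos h, if_pos h]
      exact Finset.card_pair (t.injective.ne (by simp))
    · rw [rowsOf, dif_neg h, if_neg h]
      exact Finset.card_singleton _
  · intro i j hij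
    rw [Finset.disjoint_left]
    intro a ha hb
    rcases mem_rowsOf ha with h1 | ⟨hi, h1⟩ <;> rcases mem_rowsOf hb with h2 | ⟨hj, h2⟩
    · exact hij (Sum.inl.inj (t.injective (h1.symm.trans h2)))
    · simpa using t.injective (h1.symm.trans h2)
    · simpa using t.injective (h1.symm.trans h2)
    · refine hij (Fin.ext ?_)
      have h3 := Sum.inr.inj (t.injective (h1.symm.trans h2))
      simpa using congrArg Fin.val h3

/-- The row tabloid `{t}` of a tableau `t`. -/
def rowTabOf (t : Tabl γ p q) : RowTab γ p q := ⟨rowsOf t, isRowTab_rowsOf t⟩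

/-- The column stabilizer `C_t` of a tableau: permutations preserving each
column setwise. -/
def colStab (t : Tabl γ p q) : Finset (Equiv.Perm γ) :=
  Finset.univ.filter fun σ =>
    (∀ i : Fin p, ∃ i' : Fin p, σ (t (Sum.inl i)) = t (Sum.inl i')) ∧
    (∀ j : Fin q, ∃ j' : Fin q, σ (t (Sum.inr j)) = t (Sum.inr j'))

/-- The polytabloid `ε_t = ∑_{β ∈ C_t} sgn(β) {β t}`. -/
noncomputable def polytab (t : Tabl γ p q) : MP γ p q :=
  ∑ σ ∈ colStab t, ((Equiv.Perm.sign σ : ℤ) : ℂ) • delta (rowTabOf (t.trans σ))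

variable (γ p q) in
/-- The Specht module `S^{(2^q,1^{p-q})}`: the span of all polytabloids. -/
noncomputable def SpechtMod : Submodule ℂ (MP γ p q) :=
  Submodule.span ℂ (Set.range (polytab (γ := γ) (p := p) (q := q)))

/-- The entrywise action of a permutation on a row tabloid. -/
def rowAct (σ : Equiv.Perm γ) (r : RowTab γ p q) : RowTab γ p q :=
  ⟨fun i => (r.1 i).image ⇑σ, by
    obtain ⟨h1, h2⟩ := r.2
    refine ⟨fun i => ?_, fun i j hij => ?_⟩
    · rw [Finset.card_image_of_injective _ σ.injective]; exact h1 i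
    · exact (Finset.disjoint_image σ.injective).mpr (h2 i j hij)⟩

/-- The entrywise `S_N`-action on the permutation module. -/
noncomputable def actP (σ : Equiv.Perm γ) (f : MP γ p q) : MP γ p q :=
  fun r => f (rowAct σ⁻¹ r)

end SpechtSide

/-- The tableau `t(T)` whose first column is `T` in increasing order and whose
second column is the complement of `T` in increasing order. -/
noncomputable def tabOf {n m : ℕ} (T : Col n m) : Tabl (Fin (n + m)) n m :=
  Equiv.ofBijective
    (Sum.elim (fun i => T.1.orderEmbOfFin T.2 i)
      (fun j => (T.1ᶜ).orderEmbOfFin (card_compl' T) j))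
    (by
      rw [Fintype.bijective_iff_injective_and_card]
      refine ⟨?_, by simp⟩
      rintro (i | i) (j | j) h <;> simp only [Sum.elim_inl, Sum.elim_inr] at h
      · exact congrArg Sum.inl ((T.1.orderEmbOfFin T.2).injective h)
      · have h1 := Finset.orderEmbOfFin_mem T.1 T.2 i
        have h2 := Finset.orderEmbOfFin_mem (T.1ᶜ) (card_compl' T) j
        rw [h] at h1
        simp only [Finset.mem_compl] at h2
        exact absurd h1 h2
      · have h1 := Finset.orderEmbOfFin_mem T.1 T.2 j
        have h2 := Finset.orderEmbOfFin_mem (T.1ᶜ) (card_compl' T) i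
        rw [← h] at h1
        simp only [Finset.mem_compl] at h2
        exact absurd h1 h2
      · exact congrArg Sum.inr (((T.1ᶜ).orderEmbOfFin (card_compl' T)).injective h))

/-- The `S_N`-equivariant map `α : M̃ → M^{(2^m,1^{n-m})}`, sending `v_T` to the
polytabloid `ε_{t(T)}` (its image is the Specht module). -/
noncomputable def alphaLin (n m : ℕ) : Mt n m →ₗ[ℂ] MP (Fin (n + m)) n m where
  toFun f := ∑ T : Col n m, f T • polytab (tabOf T)
  map_add' f g := by simp [add_smul, Finset.sum_add_distrib]
  map_smul' c f := by simp [Finset.smul_sum, smul_smul]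

/-- `φ(v_T)`, encoding the generalized Jacobi identity (for shape `(2^{n-1},1)`,
i.e. `n = m + 1`):
`φ(v_T) = v_T − ∑_{i=1}^n (−1)^{n−i} sgn(c_i) v_{Tᶜ ∪ {x_i}}` where
`x_i` is the `i`-th smallest element of `T` and `c_i` sorts `(y_1,…,y_{n−1},x_i)`. -/
noncomputable def phiBasis {n m : ℕ} (h : n = m + 1) (T : Col n m) : Mt n m :=
  delta T - ∑ i : Fin n,
    ((-1 : ℂ) ^ (n - 1 - (i : ℕ)) *
        invSign ((T.1ᶜ).sort (· ≤ ·) ++ [T.1.orderEmbOfFin T.2 i])) •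
      delta (⟨insert (T.1.orderEmbOfFin T.2 i) T.1ᶜ, by
        rw [Finset.card_insert_of_notMem (by
            simpa using Finset.orderEmbOfFin_mem T.1 T.2 i),
          card_compl']
        omega⟩ : Col n m)

/-- The map `φ : M̃ → M̃`, extended linearly; `ker φ ≅ ρ_{n,3}`. -/
noncomputable def phiFun {n m : ℕ} (h : n = m + 1) (f : Mt n m) : Mt n m :=
  ∑ T : Col n m, f T • phiBasis h T

/-- `φ` as a linear map. -/
noncomputable def phiLin (n m : ℕ) (h : n = m + 1) : Mt n m →ₗ[ℂ] Mt n m where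
  toFun := phiFun h
  map_add' f g := by simp [phiFun, add_smul, Finset.sum_add_distrib]
  map_smul' c f := by simp [phiFun, Finset.smul_sum, smul_smul]

/-! Write `D_{ij} = (T ∖ {i}) ∪ {n+j}`. Every column that occurs is sorted except for one entry,
so each sign is `-1` to the number of entries that this entry has to jump over. This gives
* `η(v_T) = (n-1) v_T - ∑_{i,j} (-1)^{n-i+j-1} v_{D_ij}`,
* `φ(v_T) = v_T - ∑_i (-1)^{i-1} v_{R_i}`,
* `φ(v_{R_i}) = v_{R_i} - (-1)^{i-1} v_T - ∑_j (-1)^{n+j-1} v_{D_ij}`, since `R_iᶜ = T ∖ {i}`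
  and the first column of `R_i` is `i, n+1, …, 2n-1`.

In `φ(v_T) + ∑_i (-1)^{i-1} φ(v_{R_i})` the `v_{R_i}` cancel, the `v_T` add up to
`(1-n) v_T`, and the `v_{D_ij}` are those of `-η(v_T)`. -/

lemma sum_delta_smul {ι M : Type*} [Fintype ι] [AddCommMonoid M] [Module ℂ M]
    (r : ι) (g : ι → M) : ∑ b, delta r b • g b = g r := by
  classical
  simp [delta, ite_smul]

lemma card_filter_fin_eq_of_iff {N a b : ℕ} (hb : b ≤ N) (s : Finset (Fin N))
    (P : Fin N → Prop) [DecidablePred P] (hP : ∀ y, y ∈ s ∧ P y ↔ a ≤ (y : ℕ) ∧ (y : ℕ) < b) :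
    #{y ∈ s | P y} = b - a := by
  rw [← Nat.card_Ico, ← card_map Fin.valEmbedding]
  congr 1
  ext k
  simp only [mem_map, mem_filter, Fin.valEmbedding_apply, mem_Ico]
  exact ⟨fun ⟨y, hy, hyk⟩ => hyk ▸ (hP y).mp hy,
    fun hk => ⟨⟨k, by omega⟩, (hP _).mpr hk, rfl⟩⟩

lemma neg_one_pow_eq_of_mod_two_eq {a b : ℕ} (h : a % 2 = b % 2) : (-1 : ℂ) ^ a = (-1) ^ b := by
  rw [neg_one_pow_eq_pow_mod_two, h, ← neg_one_pow_eq_pow_mod_two]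

section Inversions

variable {α : Type*} [LinearOrder α]

lemma invCount_ofFn {k : ℕ} (f : Fin k → α) :
    invCount (List.ofFn f) = #{q : Fin k × Fin k | q.1 < q.2 ∧ f q.2 < f q.1} := by
  refine card_equiv
    ((finCongr List.length_ofFn).prodCongr (finCongr List.length_ofFn)) fun q => ?_
  simp only [mem_filter, mem_univ, true_and, Equiv.prodCongr_apply, Prod.map_fst, Prod.map_snd,
    finCongr_apply, List.get_ofFn, Fin.lt_def, Fin.val_cast]

lemma card_inversions_of_strictMono_off {k : ℕ} (f : Fin k → α) (p : Fin k)
    (hf : ∀ i j, i < j → i ≠ p → j ≠ p → f i < f j) :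
    #{q : Fin k × Fin k | q.1 < q.2 ∧ f q.2 < f q.1} =
      #{i | (i < p ∧ f p < f i) ∨ (p < i ∧ f i < f p)} := by
  refine card_bij' (fun q _ => if q.1 = p then q.2 else q.1)
    (fun i _ => if i < p then (i, p) else (p, i)) ?_ ?_ ?_ ?_
  · rintro ⟨i, j⟩ hq
    simp only [mem_filter, mem_univ, true_and] at hq ⊢
    have := hf i j hq.1
    split_ifs <;> grind
  · intro i hi
    simp only [mem_filter, mem_univ, true_and] at hi ⊢
    split_ifs <;> grind
  · rintro ⟨i, j⟩ hq
    simp only [mem_filter, mem_univ, true_and] at hq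
    have := hf i j hq.1
    split_ifs <;> grind
  · intro i _
    split_ifs <;> grind

lemma invCount_ofFn_update {k : ℕ} {g : Fin k → α} (hg : StrictMono g) (p : Fin k) (x : α) :
    invCount (List.ofFn (Function.update g p x)) =
      #{i | (i < p ∧ x < g i) ∨ (p < i ∧ g i < x)} := by
  rw [invCount_ofFn, card_inversions_of_strictMono_off _ p fun i j hij hi hj => by
    simpa [Function.update_of_ne hi, Function.update_of_ne hj] using hg hij]
  refine congrArg card (filter_congr fun i _ => ?_)
  rcases eq_or_ne i p with rfl | hi
  · simp
  · simp [Function.update_of_ne hi]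

lemma invCount_ofFn_append_singleton {k : ℕ} {g : Fin k → α} (hg : StrictMono g) (x : α) :
    invCount (List.ofFn g ++ [x]) = #{i | x < g i} := by
  have hsnoc : List.ofFn g ++ [x] = List.ofFn (Fin.snoc g x) := by
    rw [List.ofFn_succ']
    simp
  rw [hsnoc, invCount_ofFn,
    card_inversions_of_strictMono_off _ (Fin.last k) fun i j hij hi hj => ?_]
  · simp only [card_filter, Fin.sum_univ_castSucc, Fin.snoc_castSucc, Fin.snoc_last,
      Fin.castSucc_lt_last, lt_irrefl, true_and, false_and, or_false, if_false, add_zero,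
      lt_asymm (Fin.castSucc_lt_last _)]
  · obtain ⟨i, rfl⟩ := Fin.exists_castSucc_eq.mpr hi
    obtain ⟨j, rfl⟩ := Fin.exists_castSucc_eq.mpr hj
    simpa using hg (Fin.castSucc_lt_castSucc_iff.mp hij)

lemma sort_eq_ofFn_orderEmbOfFin (s : Finset α) :
    s.sort (· ≤ ·) = List.ofFn (s.orderEmbOfFin rfl) := by
  rw [List.ofFn_eq_map, listMap_orderEmbOfFin_finRange]

lemma card_filter_orderEmbOfFin (s : Finset α) (P : α → Prop) [DecidablePred P] :
    #{i | P (s.orderEmbOfFin rfl i)} = #{y ∈ s | P y} := by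
  conv_rhs => rw [← image_orderEmbOfFin_univ s rfl, filter_image,
    card_image_of_injective _ (s.orderEmbOfFin rfl).injective]

lemma invSign_sort_append_singleton (s : Finset α) (x : α) :
    invSign (s.sort (· ≤ ·) ++ [x]) = (-1) ^ #{y ∈ s | x < y} := by
  rw [invSign, sort_eq_ofFn_orderEmbOfFin,
    invCount_ofFn_append_singleton (OrderEmbedding.strictMono _),
    card_filter_orderEmbOfFin s (x < ·)]

lemma invSign_replaceOne_sort [DecidableEq α] (s : Finset α) {a : α} (ha : a ∈ s) (b : α) :
    invSign (replaceOne (s.sort (· ≤ ·)) a b) =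
      (-1) ^ #{y ∈ s | (y < a ∧ b < y) ∨ (a < y ∧ y < b)} := by
  set g := s.orderEmbOfFin rfl
  obtain ⟨p, rfl⟩ : ∃ p, g p = a := by
    obtain ⟨p, hp⟩ := (s.orderIsoOfFin rfl).surjective ⟨a, ha⟩
    exact ⟨p, by rw [← coe_orderIsoOfFin_apply, hp]⟩
  have hupdate : replaceOne (List.ofFn g) (g p) b = List.ofFn (Function.update g p b) := by
    rw [replaceOne, List.map_ofFn]
    congr 1
    funext i
    simp [Function.update_apply, g.injective.eq_iff]
  rw [invSign, sort_eq_ofFn_orderEmbOfFin, hupdate, invCount_ofFn_update g.strictMono,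
    ← card_filter_orderEmbOfFin s]
  simp only [g.lt_iff_lt, g]

end Inversions

section InitialColumn

variable {n : ℕ}

/-! `initialCol n`, `jacobiCol n i` and `exchangeCol n i j` are `T`, `R_{i+1}` and the first
column of `swap_{x_{i+1}, j+1}(T)`, with all entries shifted down by one. -/

def initialCol (n : ℕ) : Col n (n - 1) :=
  ⟨univ.filter fun x : Fin (n + (n - 1)) => (x : ℕ) < n, by
    rw [Fin.card_filter_val_lt]; omega⟩

lemma mem_initialCol {x : Fin (n + (n - 1))} : x ∈ (initialCol n).1 ↔ (x : ℕ) < n := by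
  simp [initialCol]

lemma castAdd_mem_initialCol (i : Fin n) : Fin.castAdd (n - 1) i ∈ (initialCol n).1 :=
  mem_initialCol.mpr i.isLt

lemma orderEmbOfFin_initialCol :
    ⇑((initialCol n).1.orderEmbOfFin (initialCol n).2) = Fin.castAdd (n - 1) :=
  (orderEmbOfFin_unique _ castAdd_mem_initialCol (Fin.strictMono_castAdd _)).symm

lemma yel_initialCol (j : Fin (n - 1)) : yel (initialCol n) j = Fin.natAdd n j :=
  congrFun (orderEmbOfFin_unique (card_compl' _) (fun j => by simp [mem_initialCol])
    (Fin.strictMono_natAdd n)).symm j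

def jacobiCol (n : ℕ) (i : Fin n) : Col n (n - 1) :=
  ⟨insert (Fin.castAdd (n - 1) i) (initialCol n).1ᶜ, by
    rw [card_insert_of_notMem (by simpa using castAdd_mem_initialCol i), card_compl']
    have := i.isLt
    omega⟩

lemma compl_jacobiCol (i : Fin n) :
    (jacobiCol n i).1ᶜ = (initialCol n).1.erase (Fin.castAdd (n - 1) i) := by
  ext x
  simp [jacobiCol]

lemma orderEmbOfFin_jacobiCol_val (i k : Fin n) :
    ((jacobiCol n i).1.orderEmbOfFin (jacobiCol n i).2 k : ℕ) =
      if (k : ℕ) = 0 then (i : ℕ) else n + k - 1 := by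
  let f : Fin n → Fin (n + (n - 1)) := fun k =>
    ⟨if (k : ℕ) = 0 then i else n + k - 1, by have := k.isLt; have := i.isLt; split_ifs <;> omega⟩
  have hf : StrictMono f := fun a b hab => by
    have := i.isLt
    simp only [f, Fin.lt_def] at hab ⊢
    split_ifs <;> omega
  have hmem : ∀ k, f k ∈ (jacobiCol n i).1 := fun k => by
    simp only [jacobiCol, mem_insert, mem_compl, mem_initialCol, Fin.ext_iff, Fin.val_castAdd, f]
    have := k.isLt
    split_ifs <;> omega
  rw [← orderEmbOfFin_unique _ hmem hf]

noncomputable def exchangeCol (n : ℕ) (i : Fin n) (j : Fin (n - 1)) : Col n (n - 1) :=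
  ⟨swapSet (initialCol n) (Fin.castAdd (n - 1) i) j,
    swapSet_card _ (castAdd_mem_initialCol i) j⟩

lemma swapTerm_initialCol (i : Fin n) (j : Fin (n - 1)) (x : {a // a ∈ (initialCol n).1})
    (hx : x.1 = Fin.castAdd (n - 1) i) :
    swapTerm (initialCol n) x j =
      ((-1 : ℂ) ^ (n - 1 - i) * (-1) ^ (j : ℕ)) • delta (exchangeCol n i j) := by
  obtain ⟨x, hxT⟩ := x
  subst hx
  have hi := i.isLt
  have hsign₁ : invSign (replaceOne ((initialCol n).1.sort (· ≤ ·)) (Fin.castAdd (n - 1) i)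
      (yel (initialCol n) j)) = (-1) ^ (n - 1 - i) := by
    rw [invSign_replaceOne_sort _ hxT, yel_initialCol,
      card_filter_fin_eq_of_iff (a := i + 1) (b := n) (by omega) _ _ fun y => by
        simp only [mem_initialCol, Fin.lt_def, Fin.val_castAdd, Fin.val_natAdd]; omega]
    congr 1
    omega
  have hsign₂ : invSign (replaceOne ((initialCol n).1ᶜ.sort (· ≤ ·)) (yel (initialCol n) j)
      (Fin.castAdd (n - 1) i)) = (-1) ^ (j : ℕ) := by
    rw [invSign_replaceOne_sort _ (mem_compl.mpr (yel_not_mem _ j)), yel_initialCol,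
      card_filter_fin_eq_of_iff (a := n) (b := n + j) (by omega) _ _ fun y => by
        simp only [mem_compl, mem_initialCol, Fin.lt_def, Fin.val_castAdd, Fin.val_natAdd]
        omega]
    congr 1
    omega
  rw [swapTerm, hsign₁, hsign₂]
  rfl

lemma etaBasis_initialCol :
    etaBasis (initialCol n) = ((n - 1 : ℕ) : ℂ) • delta (initialCol n) +
      ∑ i : Fin n, ∑ j : Fin (n - 1),
        ((-1 : ℂ) ^ (i : ℕ) * (-1) ^ (n + j)) • delta (exchangeCol n i j) := by
  have hrow (j : Fin (n - 1)) : ∑ x ∈ (initialCol n).1.attach, swapTerm (initialCol n) x j =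
      ∑ i : Fin n, ((-1 : ℂ) ^ (n - 1 - i) * (-1) ^ (j : ℕ)) • delta (exchangeCol n i j) := by
    rw [← univ_eq_attach, ← ((initialCol n).1.orderIsoOfFin (initialCol n).2).toEquiv.sum_comp]
    exact sum_congr rfl fun i _ => swapTerm_initialCol i j _ (by simp [orderEmbOfFin_initialCol])
  rw [etaBasis, sub_eq_add_neg, ← sum_neg_distrib]
  simp only [hrow, ← sum_neg_distrib, ← neg_smul]
  rw [sum_comm]
  congr 1
  refine sum_congr rfl fun i _ => sum_congr rfl fun j _ => ?_
  have hi := i.isLt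
  rw [← pow_add, ← pow_add, neg_eq_neg_one_mul, ← pow_succ']
  congr 1
  exact neg_one_pow_eq_of_mod_two_eq (by omega)

lemma phiBasis_initialCol (h : n = n - 1 + 1) :
    phiBasis h (initialCol n) =
      delta (initialCol n) - ∑ i : Fin n, (-1 : ℂ) ^ (i : ℕ) • delta (jacobiCol n i) := by
  rw [phiBasis]
  congr 1
  refine sum_congr rfl fun i _ => ?_
  have hi := i.isLt
  have hx : (initialCol n).1.orderEmbOfFin (initialCol n).2 i = Fin.castAdd (n - 1) i :=
    congrFun orderEmbOfFin_initialCol i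
  congr 1
  · rw [hx, invSign_sort_append_singleton, ← pow_add,
      card_filter_fin_eq_of_iff (a := n) (b := n + (n - 1)) le_rfl _ _ fun y => by
        simp only [mem_compl, mem_initialCol, Fin.lt_def, Fin.val_castAdd]; omega]
    exact neg_one_pow_eq_of_mod_two_eq (by omega)
  · exact congrArg delta (Subtype.ext (by simp only [hx, jacobiCol]))

lemma phiBasis_jacobiCol (h : n = n - 1 + 1) (i : Fin n) :
    phiBasis h (jacobiCol n i) =
      delta (jacobiCol n i) - (-1 : ℂ) ^ (i : ℕ) • delta (initialCol n) -
        ∑ j : Fin (n - 1), (-1 : ℂ) ^ (n + j) • delta (exchangeCol n i j) := by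
  have hi := i.isLt
  rw [phiBasis, ← (finCongr h.symm).sum_comp, Fin.sum_univ_succ, sub_add_eq_sub_sub]
  have hx (k : Fin (n - 1 + 1)) : (((jacobiCol n i).1.orderEmbOfFin (jacobiCol n i).2
      (finCongr h.symm k)) : ℕ) = if (k : ℕ) = 0 then (i : ℕ) else n + k - 1 := by
    simp [orderEmbOfFin_jacobiCol_val]
  congr 2
  · have hx0 : (jacobiCol n i).1.orderEmbOfFin (jacobiCol n i).2 (finCongr h.symm 0) =
        Fin.castAdd (n - 1) i := Fin.ext ((hx 0).trans (by simp))
    congr 1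
    · rw [hx0, invSign_sort_append_singleton, compl_jacobiCol, ← pow_add,
        card_filter_fin_eq_of_iff (a := i + 1) (b := n) (by omega) _ _ fun y => by
          simp only [mem_erase, mem_initialCol, Fin.lt_def, Fin.val_castAdd, ne_eq, Fin.ext_iff]
          omega]
      exact neg_one_pow_eq_of_mod_two_eq (by
        simp only [finCongr_apply, Fin.val_cast, Fin.val_zero, tsub_zero]
        omega)
    · refine congrArg delta (Subtype.ext ?_)
      simp only [hx0, compl_jacobiCol]
      exact insert_erase (castAdd_mem_initialCol i)
  · funext j
    have hxj : (jacobiCol n i).1.orderEmbOfFin (jacobiCol n i).2 (finCongr h.symm j.succ) =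
        Fin.natAdd n j := Fin.ext ((hx j.succ).trans (by simp))
    congr 1
    · rw [hxj, invSign_sort_append_singleton, compl_jacobiCol, ← pow_add,
        card_filter_fin_eq_of_iff (a := 0) (b := 0) (by omega) _ _ fun y => by
          simp only [mem_erase, mem_initialCol, Fin.lt_def, Fin.val_natAdd]
          omega]
      exact neg_one_pow_eq_of_mod_two_eq (by
        simp only [finCongr_apply, Fin.val_cast, Fin.val_succ, tsub_self, add_zero]
        omega)
    · refine congrArg delta (Subtype.ext ?_)
      simp only [hxj, compl_jacobiCol, exchangeCol, swapSet, yel_initialCol]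

end InitialColumn

/-- For `T = {1,…,n}` and `R_i = {i} ∪ {n+1,…,2n-1}`
(`1 ≤ i ≤ n`), one has `η(v_T) = -(φ(v_T) + ∑_{i=1}^n (-1)^{i-1} φ(v_{R_i}))`.
(Here `{1, …, 2n-1}` is identified with `Fin (n + (n-1))` via `x ↦ x - 1`, so
`T` corresponds to the set of the `n` smallest elements and `R_i` to
`{i - 1} ∪ Tᶜ`.) -/
theorem eta_vT_in_terms_of_phi (n : ℕ) (hn : 2 ≤ n)
    (T : Col n (n - 1))
    (hT : T.1 = Finset.univ.filter (fun x : Fin (n + (n - 1)) => (x : ℕ) < n))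
    (R : Fin n → Col n (n - 1))
    (hR : ∀ i : Fin n, (R i).1 = insert (Fin.castLE (by omega) i) T.1ᶜ) :
    etaFun (delta T) =
      -(phiFun (by omega) (delta T) +
        ∑ i : Fin n, (-1 : ℂ) ^ (i : ℕ) • phiFun (by omega) (delta (R i))) := by
  obtain rfl : T = initialCol n := Subtype.ext hT
  obtain rfl : R = jacobiCol n := funext fun i => Subtype.ext (hR i)
  simp only [etaFun, phiFun, sum_delta_smul, etaBasis_initialCol, phiBasis_initialCol,
    phiBasis_jacobiCol]
  simp only [smul_sub, smul_sum, smul_smul, ← pow_add, Even.neg_one_pow ⟨_, rfl⟩, one_smul,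
    sum_sub_distrib, sum_const, card_univ, Fintype.card_fin]
  have hcount : n • delta (initialCol n) =
      (n - 1 : ℕ) • delta (initialCol n) + delta (initialCol n) := by
    rw [← succ_nsmul, Nat.sub_add_cancel (by omega)]
  rw [Nat.cast_smul_eq_nsmul, hcount]
  abel
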